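/- arXiv:2501.00695 — 3 statements merged into one kernel-verified Lean document; each statement's English description precedes it below -/
import Mathlib

section
/- For all real N×r matrices X, Y, A, B, the sum over all pairs (i,j) with 1 ≤ i < j ≤ N of tr(Xᵀ ℰ_{ij}ᵀ A) · tr(Yᵀ ℰ_{ij}ᵀ B) equals ⟨𝒜(A Xᵀ), 𝒜(B Yᵀ)⟩_F. -/
open Matrix BigOperators

/-- `ℰ_{ij} = (√2/2)(E_{ij} − E_{ji})` where `E_{ij}` is the matrix with a `1`
in entry `(i,j)` and `0` elsewhere. -/
noncomputable def calE (N : ℕ) (i j : Fin N) : Matrix (Fin N) (Fin N) ℝ :=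
  (Real.sqrt 2 / 2) • (Matrix.single i j (1 : ℝ) - Matrix.single j i (1 : ℝ))

/-- The Frobenius inner product `⟨A,B⟩_F = tr(Aᵀ B)`. -/
noncomputable def frob {N r : ℕ} (A B : Matrix (Fin N) (Fin r) ℝ) : ℝ := (Aᵀ * B).trace

/-- The skew-symmetrization `𝒜(A) = (A − Aᵀ)/2`. -/
noncomputable def skewPart {N : ℕ} (A : Matrix (Fin N) (Fin N) ℝ) : Matrix (Fin N) (Fin N) ℝ :=
  (1 / 2 : ℝ) • (A - Aᵀ)

/-!
By cyclicity of the trace, `tr(Xᵀ ℰ_{ij}ᵀ A) = tr(A Xᵀ ℰ_{ij}ᵀ) = √2 · 𝒜(A Xᵀ)_{ij}`, so the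
summand for `i < j` is `2 · 𝒜(A Xᵀ)_{ij} 𝒜(B Yᵀ)_{ij}`. The product of two skew-symmetric
matrices' entries is symmetric in `(i, j)` and vanishes on the diagonal, so twice its sum over
`i < j` is its sum over all `(i, j)`, which is the Frobenius inner product.
-/

theorem Finset.sum_sum_ite_lt_two_nsmul {ι M : Type*} [Fintype ι] [LinearOrder ι]
    [AddCommMonoid M] (f : ι → ι → M) (hsymm : ∀ i j, f j i = f i j) (hdiag : ∀ i, f i i = 0) :
    ∑ i, ∑ j, (if i < j then 2 • f i j else 0) = ∑ i, ∑ j, f i j := by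
  have hsplit : ∀ i j, f i j = (if i < j then f i j else 0) + (if j < i then f i j else 0) := by
    intro i j
    rcases lt_trichotomy i j with h | rfl | h
    · simp [h, h.not_gt]
    · simp [hdiag]
    · simp [h, h.not_gt]
  have hswap : ∑ i, ∑ j, (if j < i then f i j else 0) = ∑ i, ∑ j, (if i < j then f i j else 0) := by
    rw [Finset.sum_comm]
    simp only [hsymm]
  calc ∑ i, ∑ j, (if i < j then 2 • f i j else 0)
      = 2 • ∑ i, ∑ j, (if i < j then f i j else 0) := by
        simp only [Finset.smul_sum, smul_ite, smul_zero]
    _ = ∑ i, ∑ j, (if i < j then f i j else 0) + ∑ i, ∑ j, (if j < i then f i j else 0) := by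
        rw [hswap, two_nsmul]
    _ = ∑ i, ∑ j, f i j := by
        simp only [← Finset.sum_add_distrib, ← hsplit]

theorem skewPart_apply {N : ℕ} (M : Matrix (Fin N) (Fin N) ℝ) (i j : Fin N) :
    skewPart M i j = (M i j - M j i) / 2 := by
  simp only [skewPart, one_div, Matrix.smul_apply, Matrix.sub_apply, transpose_apply, smul_eq_mul]
  ring

theorem skewPart_apply_swap {N : ℕ} (M : Matrix (Fin N) (Fin N) ℝ) (i j : Fin N) :
    skewPart M j i = -skewPart M i j := by
  rw [skewPart_apply, skewPart_apply]
  ring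

theorem trace_mul_calE_transpose {N : ℕ} (M : Matrix (Fin N) (Fin N) ℝ) (i j : Fin N) :
    (M * (calE N i j)ᵀ).trace = Real.sqrt 2 * skewPart M i j := by
  simp only [calE, transpose_smul, transpose_sub, transpose_single, Algebra.mul_smul_comm,
    Matrix.mul_sub, trace_smul, trace_sub, trace_mul_single, MulOpposite.op_one, one_smul,
    smul_eq_mul, skewPart_apply]
  ring

theorem frob_eq_sum_sum {N r : ℕ} (A B : Matrix (Fin N) (Fin r) ℝ) :
    frob A B = ∑ i, ∑ k, A i k * B i k := by
  rw [frob, trace, Finset.sum_comm]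
  simp [mul_apply]

theorem stmt_5 (N r : ℕ) (X Y A B : Matrix (Fin N) (Fin r) ℝ) :
    ∑ i : Fin N, ∑ j : Fin N,
      (if i < j then
        (Xᵀ * (calE N i j)ᵀ * A).trace * (Yᵀ * (calE N i j)ᵀ * B).trace
      else 0)
      = frob (skewPart (A * Xᵀ)) (skewPart (B * Yᵀ)) := by
  have hterm : ∀ i j, (Xᵀ * (calE N i j)ᵀ * A).trace * (Yᵀ * (calE N i j)ᵀ * B).trace
      = 2 • (skewPart (A * Xᵀ) i j * skewPart (B * Yᵀ) i j) := by
    intro i j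
    rw [trace_mul_cycle, trace_mul_calE_transpose, trace_mul_cycle, trace_mul_calE_transpose,
      two_nsmul]
    have hsqrt : Real.sqrt 2 * Real.sqrt 2 = 2 := Real.mul_self_sqrt zero_le_two
    linear_combination skewPart (A * Xᵀ) i j * skewPart (B * Yᵀ) i j * hsqrt
  simp only [hterm]
  rw [Finset.sum_sum_ite_lt_two_nsmul, frob_eq_sum_sum]
  · intro i j
    rw [skewPart_apply_swap (A * Xᵀ) i j, skewPart_apply_swap (B * Yᵀ) i j, neg_mul_neg]
  · intro i
    rw [skewPart_apply, sub_self, zero_div, zero_mul]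
end

section
/- Let ψ : ℝ → ℝ be twice continuously differentiable, and let X, Y ∈ ℝ^{N×r} satisfy XᵀX = I_r and YᵀY = I_r (i.e. X, Y lie on the Stiefel manifold V_r(N)). For each pair 1 ≤ i < j ≤ N define f_{ij}(t,t') := ψ(‖exp(t·ℰ_{ij})X − exp(t'·ℰ_{ij})Y‖²_F), where exp is the matrix exponential. Then the sum over all pairs (i,j) with 1 ≤ i < j ≤ N of the mixed partial derivative −∂²f_{ij}/∂t∂t' evaluated at (t,t') = (0,0) equals (N−1)·ψ'(‖X−Y‖²_F)·tr(XᵀY) + 4·ψ''(‖X−Y‖²_F)·‖𝒜(XYᵀ)‖²_F. -/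
open Matrix BigOperators

/-- The squared Frobenius norm `‖A‖²_F = ⟨A,A⟩_F`. -/
noncomputable def frobSq {N r : ℕ} (A : Matrix (Fin N) (Fin r) ℝ) : ℝ := frob A A

/-! Since `ℰ_{ij}` is skew, `exp (t ℰ)` is orthogonal and
`exp (t ℰ)ᵀ exp (t' ℰ) = exp ((t' - t) ℰ)`, so
`‖exp (t ℰ) X - exp (t' ℰ) Y‖²_F = ‖X‖²_F + ‖Y‖²_F - 2 tr (exp ((t' - t) ℰ) Y Xᵀ)` depends on
`t' - t` only, and the mixed partial is minus a second derivative in one variable. By the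
second-order chain rule, with `M = X Yᵀ`, it equals
`-(2 ψ'' (M i j - M j i)² + ψ' (M i i + M j j))`, because `tr (ℰ Y Xᵀ) = (√2/2) (M i j - M j i)`
and `ℰ² = -(E_ii + E_jj)/2`. Summing over `i < j`, the diagonal terms give `(N - 1) tr M` and
the squares give `4 ‖𝒜(M)‖²_F`. -/

open NormedSpace

lemma frobSq_sub {N r : ℕ} (A B : Matrix (Fin N) (Fin r) ℝ) :
    frobSq (A - B) = frobSq A + frobSq B - 2 * frob A B := by
  have hBA : frob B A = frob A B := by
    rw [frob, ← trace_transpose, transpose_mul, transpose_transpose, frob]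
  simp only [frobSq, frob, transpose_sub, Matrix.sub_mul, Matrix.mul_sub, trace_sub] at hBA ⊢
  rw [hBA]
  ring

lemma frob_mul_mul {N r : ℕ} (U V : Matrix (Fin N) (Fin N) ℝ) (X Y : Matrix (Fin N) (Fin r) ℝ) :
    frob (U * X) (V * Y) = trace (Uᵀ * V * (Y * Xᵀ)) := by
  rw [frob, transpose_mul, Matrix.mul_assoc, ← Matrix.mul_assoc Uᵀ, trace_mul_comm,
    Matrix.mul_assoc]

lemma transpose_exp_smul_mul_exp_smul {n : Type*} [Fintype n] [DecidableEq n]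
    {E : Matrix n n ℝ} (hE : Eᵀ = -E) (t t' : ℝ) :
    (exp (t • E))ᵀ * exp (t' • E) = exp ((t' - t) • E) := by
  rw [← Matrix.exp_transpose, transpose_smul, hE, smul_neg, ← neg_smul,
    ← Matrix.exp_add_of_commute _ _ ((Commute.refl E).smul_left _ |>.smul_right _), ← add_smul,
    neg_add_eq_sub]

section ExpDeriv

attribute [local instance] Matrix.linftyOpNormedRing Matrix.linftyOpNormedAlgebra

lemma hasDerivAt_trace_exp_smul_mul {n : Type*} [Fintype n] [DecidableEq n]
    (E A : Matrix n n ℝ) (s : ℝ) :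
    HasDerivAt (fun u : ℝ => trace (exp (u • E) * A)) (trace (exp (s • E) * (E * A))) s := by
  rw [← Matrix.mul_assoc]
  exact (traceLinearMap n ℝ ℝ).toContinuousLinearMap.hasFDerivAt.comp_hasDerivAt s
    ((hasDerivAt_exp_smul_const E s).mul_const A)

end ExpDeriv

section calE

variable {N : ℕ}

lemma calE_transpose (i j : Fin N) : (calE N i j)ᵀ = -calE N i j := by
  rw [calE, transpose_smul, transpose_sub, transpose_single, transpose_single, ← smul_neg, neg_sub]

lemma calE_mul_calE {i j : Fin N} (hij : i ≠ j) :
    calE N i j * calE N i j = -(1 / 2 : ℝ) • (single i i 1 + single j j 1) := by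
  have hsqrt : Real.sqrt 2 / 2 * (Real.sqrt 2 / 2) = 1 / 2 := by
    rw [div_mul_div_comm, Real.mul_self_sqrt zero_le_two]; norm_num
  rw [calE, smul_mul_smul_comm, hsqrt]
  simp only [Matrix.sub_mul, Matrix.mul_sub, single_mul_single_same, mul_one]
  rw [single_mul_single_of_ne 1 i j i hij.symm,
    single_mul_single_of_ne 1 j i j hij]
  module

lemma trace_calE_mul (i j : Fin N) (C : Matrix (Fin N) (Fin N) ℝ) :
    trace (calE N i j * C) = Real.sqrt 2 / 2 * (C j i - C i j) := by
  rw [calE, Matrix.smul_mul, trace_smul, Matrix.sub_mul, trace_sub, trace_single_mul,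
    trace_single_mul, one_smul, one_smul, smul_eq_mul]

lemma trace_calE_mul_calE_mul {i j : Fin N} (hij : i ≠ j) (C : Matrix (Fin N) (Fin N) ℝ) :
    trace (calE N i j * (calE N i j * C)) = -(C i i + C j j) / 2 := by
  rw [← Matrix.mul_assoc, calE_mul_calE hij, Matrix.smul_mul, trace_smul, Matrix.add_mul,
    trace_add, trace_single_mul, trace_single_mul, one_smul, one_smul, smul_eq_mul]
  ring

end calE

lemma deriv_deriv_comp_sub (g : ℝ → ℝ) :
    deriv (fun t => deriv (fun t' => g (t' - t)) 0) 0 = -deriv (deriv g) 0 := by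
  simp only [deriv_comp_sub_const, zero_sub]
  simpa using deriv_comp_neg (f := deriv g) (x := 0)

lemma deriv_deriv_comp {ψ φ φ' : ℝ → ℝ} {φ'' x : ℝ} (hψ : ContDiff ℝ 2 ψ)
    (hφ : ∀ s, HasDerivAt φ (φ' s) s) (hφ' : HasDerivAt φ' φ'' x) :
    deriv (deriv (fun s => ψ (φ s))) x
      = deriv (deriv ψ) (φ x) * φ' x ^ 2 + deriv ψ (φ x) * φ'' := by
  have hψ' : Differentiable ℝ (deriv ψ) :=
    (ContDiff.deriv' (n := 1) hψ).differentiable one_ne_zero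
  have h1 : deriv (fun s => ψ (φ s)) = fun s => deriv ψ (φ s) * φ' s := by
    funext s
    exact ((hψ.differentiable two_ne_zero _).hasDerivAt.comp s (hφ s)).deriv
  have h2 : HasDerivAt (fun s => deriv ψ (φ s) * φ' s)
      (deriv (deriv ψ) (φ x) * φ' x * φ' x + deriv ψ (φ x) * φ'') x :=
    ((hψ' _).hasDerivAt.comp x (hφ x)).mul hφ'
  rw [h1, h2.deriv]
  ring

lemma frobSq_exp_smul_mul_sub {N r : ℕ} {E : Matrix (Fin N) (Fin N) ℝ} (hE : Eᵀ = -E)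
    (X Y : Matrix (Fin N) (Fin r) ℝ) (t t' : ℝ) :
    frobSq (exp (t • E) * X - exp (t' • E) * Y)
      = frobSq X + frobSq Y - 2 * trace (exp ((t' - t) • E) * (Y * Xᵀ)) := by
  have hisometry (s : ℝ) (Z : Matrix (Fin N) (Fin r) ℝ) : frobSq (exp (s • E) * Z) = frobSq Z := by
    rw [frobSq, frob_mul_mul, transpose_exp_smul_mul_exp_smul hE, sub_self, zero_smul, exp_zero,
      Matrix.one_mul, frobSq, frob, trace_mul_comm]
  rw [frobSq_sub, hisometry, hisometry, frob_mul_mul, transpose_exp_smul_mul_exp_smul hE]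

lemma neg_deriv_deriv_frobSq_exp_calE {N r : ℕ} (ψ : ℝ → ℝ) (hψ : ContDiff ℝ 2 ψ)
    (X Y : Matrix (Fin N) (Fin r) ℝ) {i j : Fin N} (hij : i ≠ j) :
    -deriv (fun t : ℝ => deriv (fun t' : ℝ =>
        ψ (frobSq (exp (t • calE N i j) * X - exp (t' • calE N i j) * Y))) 0) 0
      = 2 * deriv (deriv ψ) (frobSq (X - Y)) * ((X * Yᵀ) i j - (X * Yᵀ) j i) ^ 2
        + deriv ψ (frobSq (X - Y)) * ((X * Yᵀ) i i + (X * Yᵀ) j j) := by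
  simp only [frobSq_exp_smul_mul_sub (calE_transpose i j)]
  set E := calE N i j
  set C : Matrix (Fin N) (Fin N) ℝ := Y * Xᵀ
  set φ : ℝ → ℝ := fun s : ℝ => frobSq X + frobSq Y - 2 * trace (exp (s • E) * C)
  have hφ (s : ℝ) : HasDerivAt φ (-2 * trace (exp (s • E) * (E * C))) s := by
    simpa using ((hasDerivAt_trace_exp_smul_mul E C s).const_mul 2).const_sub _
  have hφ' : HasDerivAt (fun s : ℝ => -2 * trace (exp (s • E) * (E * C)))
      (-2 * trace (exp ((0 : ℝ) • E) * (E * (E * C)))) 0 :=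
    (hasDerivAt_trace_exp_smul_mul E (E * C) 0).const_mul _
  have hφ0 : φ 0 = frobSq (X - Y) := by
    simpa [φ] using (frobSq_exp_smul_mul_sub (calE_transpose i j) X Y 0 0).symm
  have hC (a b : Fin N) : C a b = (X * Yᵀ) b a := by
    rw [show C = (X * Yᵀ)ᵀ by simp [C], transpose_apply]
  rw [deriv_deriv_comp_sub (fun s => ψ (φ s)), neg_neg, deriv_deriv_comp hψ hφ hφ', hφ0]
  simp only [E, zero_smul, exp_zero, Matrix.one_mul, trace_calE_mul, trace_calE_mul_calE_mul hij,
    hC]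
  have h2 : Real.sqrt 2 ^ 2 = 2 := Real.sq_sqrt (by norm_num)
  linear_combination (deriv (deriv ψ) (frobSq (X - Y)) * ((X * Yᵀ) i j - (X * Yᵀ) j i) ^ 2) * h2

lemma two_nsmul_sum_ite_lt_add_sum_diag {ι M : Type*} [Fintype ι] [LinearOrder ι]
    [AddCommMonoid M] (t : ι → ι → M) (hsym : ∀ i j, t i j = t j i) :
    2 • ∑ i, ∑ j, (if i < j then t i j else 0) + ∑ i, t i i = ∑ i, ∑ j, t i j := by
  have hsplit (i j : ι) : t i j = (if i < j then t i j else 0) + (if j < i then t i j else 0)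
      + (if i = j then t i j else 0) := by
    rcases lt_trichotomy i j with h | rfl | h
    · simp [h, h.not_gt, h.ne]
    · simp
    · simp [h, h.not_gt, h.ne']
  have hswap : ∑ i, ∑ j, (if j < i then t i j else 0) = ∑ i, ∑ j, (if i < j then t i j else 0) := by
    rw [Finset.sum_comm]
    exact Finset.sum_congr rfl fun i _ => Finset.sum_congr rfl fun j _ => by rw [hsym]
  conv_rhs => enter [2, i, 2, j]; rw [hsplit i j]
  simp only [Finset.sum_add_distrib, hswap, Finset.sum_ite_eq, Finset.mem_univ, if_true, two_nsmul]

lemma four_mul_frobSq_skewPart {N : ℕ} (M : Matrix (Fin N) (Fin N) ℝ) :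
    4 * frobSq (skewPart M) = ∑ i, ∑ j, (M i j - M j i) ^ 2 := by
  simp only [frobSq, frob, skewPart, trace, diag_apply, mul_apply, transpose_apply,
    Matrix.smul_apply, Matrix.sub_apply, smul_eq_mul, Finset.mul_sum]
  rw [Finset.sum_comm]
  exact Finset.sum_congr rfl fun i _ => Finset.sum_congr rfl fun j _ => by ring

lemma sum_ite_lt_sq_sub_add_diag {N : ℕ} (M : Matrix (Fin N) (Fin N) ℝ) (a b : ℝ) :
    ∑ i, ∑ j, (if i < j then 2 * b * (M i j - M j i) ^ 2 + a * (M i i + M j j) else 0)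
      = (N - 1) * a * trace M + 4 * b * frobSq (skewPart M) := by
  have h := two_nsmul_sum_ite_lt_add_sum_diag
    (fun i j => 2 * b * (M i j - M j i) ^ 2 + a * (M i i + M j j)) (fun i j => by ring)
  simp only [sub_self, sq, mul_zero, zero_add, Finset.sum_add_distrib, ← Finset.mul_sum,
    Finset.sum_const, Finset.card_univ, Fintype.card_fin, nsmul_eq_mul, Nat.cast_ofNat] at h
  rw [mul_assoc 4 b, mul_left_comm 4 b, four_mul_frobSq_skewPart, trace]
  simp only [diag_apply, sq]
  linarith

theorem stmt_8_general (N r : ℕ) (ψ : ℝ → ℝ) (hψ : ContDiff ℝ 2 ψ)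
    (X Y : Matrix (Fin N) (Fin r) ℝ)
    (f : Fin N → Fin N → ℝ → ℝ → ℝ)
    (hf : ∀ i j t t', f i j t t' =
      ψ (frobSq (NormedSpace.exp (t • calE N i j) * X -
                 NormedSpace.exp (t' • calE N i j) * Y))) :
    ∑ i : Fin N, ∑ j : Fin N,
      (if i < j then -(deriv (fun t => deriv (fun t' => f i j t t') 0) 0) else 0)
      = (N - 1 : ℝ) * deriv ψ (frobSq (X - Y)) * (Xᵀ * Y).trace
        + 4 * deriv (deriv ψ) (frobSq (X - Y)) * frobSq (skewPart (X * Yᵀ)) := by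
  set M := X * Yᵀ
  have htrace : trace M = trace (Xᵀ * Y) := by
    rw [trace_mul_comm, ← trace_transpose, transpose_mul, transpose_transpose]
  calc _ = ∑ i, ∑ j, (if i < j then 2 * deriv (deriv ψ) (frobSq (X - Y)) * (M i j - M j i) ^ 2
          + deriv ψ (frobSq (X - Y)) * (M i i + M j j) else 0) := by
        refine Finset.sum_congr rfl fun i _ => Finset.sum_congr rfl fun j _ => ?_
        split_ifs with hij
        · simp only [hf]
          exact neg_deriv_deriv_frobSq_exp_calE ψ hψ X Y hij.ne
        · rfl
    _ = _ := by rw [sum_ite_lt_sq_sub_add_diag, htrace]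

theorem stmt_8 (N r : ℕ) (ψ : ℝ → ℝ) (hψ : ContDiff ℝ 2 ψ)
    (X Y : Matrix (Fin N) (Fin r) ℝ)
    (hX : Xᵀ * X = 1) (hY : Yᵀ * Y = 1)
    (f : Fin N → Fin N → ℝ → ℝ → ℝ)
    (hf : ∀ i j t t', f i j t t' =
      ψ (frobSq (NormedSpace.exp (t • calE N i j) * X -
                 NormedSpace.exp (t' • calE N i j) * Y))) :
    ∑ i : Fin N, ∑ j : Fin N,
      (if i < j then -(deriv (fun t => deriv (fun t' => f i j t t') 0) 0) else 0)
      = (N - 1 : ℝ) * deriv ψ (frobSq (X - Y)) * (Xᵀ * Y).trace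
        + 4 * deriv (deriv ψ) (frobSq (X - Y)) * frobSq (skewPart (X * Yᵀ)) :=
  stmt_8_general N r ψ hψ X Y f hf
end

section
/- For symmetric matrices X, Y ∈ ℝ^{N×N}, the sum over all pairs (i,j) with 1 ≤ i < j ≤ N of tr[(ℰ_{ij}X − Xℰ_{ij})(ℰ_{ij}Y − Yℰ_{ij})] equals N·tr(XY) − tr(X)·tr(Y). -/
/-! Write `ℰ = ℰ_{ij}`. By cyclicity of the trace,
`tr([ℰ,X][ℰ,Y]) = 2 tr(ℰXℰY) - tr(ℰ²XY) - tr(ℰ²YX)`. The summand is unchanged under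
`ℰ_{ji} = -ℰ_{ij}` and vanishes for `i = j`, so the sum over `i < j` is half the sum over all
pairs. Over all pairs, `∑ tr(AXAY) = 2 (tr(XᵀY) - tr X tr Y)` for `A = E_{ij} - E_{ji}`, and the
`ℰ²` terms are the case `X = 1`; symmetry of `X` turns `tr(XᵀY)` into `tr(XY)`. -/

open Matrix BigOperators

theorem sum_sum_ite_lt_add_self_of_symm {ι M : Type*} [Fintype ι] [LinearOrder ι]
    [AddCommMonoid M] (f : ι → ι → M) (hsymm : ∀ i j, f i j = f j i)
    (hdiag : ∀ i, f i i = 0) :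
    (∑ i, ∑ j, if i < j then f i j else 0) + (∑ i, ∑ j, if i < j then f i j else 0) =
      ∑ i, ∑ j, f i j := by
  conv_lhs => arg 2; rw [Finset.sum_comm]
  rw [← Finset.sum_add_distrib]
  refine Finset.sum_congr rfl fun i _ => ?_
  rw [← Finset.sum_add_distrib]
  refine Finset.sum_congr rfl fun j _ => ?_
  rcases lt_trichotomy i j with h | rfl | h
  · simp [h, h.not_gt]
  · simp [hdiag]
  · simp [h, h.not_gt, hsymm j i]

theorem neg_commutator_mul_neg_commutator {A : Type*} [Ring A] (E X Y : A) :
    (-E * X - X * -E) * (-E * Y - Y * -E) = (E * X - X * E) * (E * Y - Y * E) := by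
  noncomm_ring

namespace Matrix

variable {n R : Type*} [CommRing R]

theorem trace_commutator_mul_commutator [Fintype n] (E X Y : Matrix n n R) :
    trace ((E * X - X * E) * (E * Y - Y * E)) =
      2 * trace (E * X * E * Y) - trace (E * E * (X * Y)) - trace (E * E * (Y * X)) := by
  have h1 : trace (E * X * Y * E) = trace (E * E * (X * Y)) := by
    simpa only [Matrix.mul_assoc] using trace_mul_comm (E * X * Y) E
  have h2 : trace (X * E * E * Y) = trace (E * E * (Y * X)) := by
    simpa only [Matrix.mul_assoc] using trace_mul_comm X (E * E * Y)
  have h3 : trace (X * E * Y * E) = trace (E * X * E * Y) := by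
    simpa only [Matrix.mul_assoc] using trace_mul_comm (X * E * Y) E
  simp only [sub_mul, mul_sub, trace_sub, ← Matrix.mul_assoc, h1, h2, h3]
  ring

variable [DecidableEq n]

def skewSingle (i j : n) : Matrix n n R := single i j 1 - single j i 1

theorem skewSingle_swap (i j : n) : (skewSingle j i : Matrix n n R) = -skewSingle i j := by
  simp [skewSingle]

@[simp]
theorem skewSingle_self (i : n) : (skewSingle i i : Matrix n n R) = 0 := by
  simp [skewSingle]

variable [Fintype n]

theorem trace_single_mul_mul_single_mul (a b c d : n) (X Y : Matrix n n R) :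
    trace (single a b 1 * X * single c d 1 * Y) = X b c * Y d a := by
  simp [trace_single_mul]

theorem trace_skewSingle_mul_mul_skewSingle_mul (i j : n) (X Y : Matrix n n R) :
    trace (skewSingle i j * X * skewSingle i j * Y) =
      X j i * Y j i + X i j * Y i j - X j j * Y i i - X i i * Y j j := by
  simp only [skewSingle, sub_mul, mul_sub, trace_sub, trace_single_mul_mul_single_mul]
  ring

theorem sum_trace_skewSingle_mul_mul_skewSingle_mul (X Y : Matrix n n R) :
    ∑ i, ∑ j, trace (skewSingle i j * X * skewSingle i j * Y) =
      2 * (trace (Xᵀ * Y) - trace X * trace Y) := by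
  have hT : trace (Xᵀ * Y) = ∑ i, ∑ j, X i j * Y i j := by
    simp only [trace, diag_apply, mul_apply, transpose_apply]
    exact Finset.sum_comm
  have hXY : trace X * trace Y = ∑ i, ∑ j, X i i * Y j j := by
    simp only [trace, diag_apply, Finset.sum_mul_sum]
  simp only [trace_skewSingle_mul_mul_skewSingle_mul, Finset.sum_sub_distrib,
    Finset.sum_add_distrib]
  rw [hT, hXY, Finset.sum_comm (f := fun i j => X j i * Y j i),
    Finset.sum_comm (f := fun i j => X j j * Y i i)]
  ring

theorem sum_trace_skewSingle_mul_skewSingle_mul (M : Matrix n n R) :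
    ∑ i, ∑ j, trace (skewSingle i j * skewSingle i j * M) =
      2 * (1 - Fintype.card n) * trace M := by
  have h := sum_trace_skewSingle_mul_mul_skewSingle_mul (1 : Matrix n n R) M
  simp only [Matrix.mul_one, transpose_one, Matrix.one_mul, trace_one] at h
  rw [h]
  ring

theorem sum_trace_commutator_skewSingle_mul_commutator (X Y : Matrix n n R) :
    ∑ i, ∑ j, trace ((skewSingle i j * X - X * skewSingle i j) *
        (skewSingle i j * Y - Y * skewSingle i j)) =
      4 * (trace (Xᵀ * Y) - trace X * trace Y + (Fintype.card n - 1) * trace (X * Y)) := by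
  simp only [trace_commutator_mul_commutator, Finset.sum_sub_distrib, ← Finset.mul_sum,
    sum_trace_skewSingle_mul_mul_skewSingle_mul, sum_trace_skewSingle_mul_skewSingle_mul,
    trace_mul_comm Y X]
  ring

end Matrix

theorem calE_eq_smul_skewSingle (N : ℕ) (i j : Fin N) :
    calE N i j = (Real.sqrt 2 / 2) • skewSingle i j := rfl

theorem calE_swap (N : ℕ) (i j : Fin N) : calE N j i = -calE N i j := by
  rw [calE_eq_smul_skewSingle, calE_eq_smul_skewSingle, skewSingle_swap, smul_neg]

theorem trace_commutator_calE_mul_commutator (N : ℕ) (i j : Fin N)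
    (X Y : Matrix (Fin N) (Fin N) ℝ) :
    ((calE N i j * X - X * calE N i j) * (calE N i j * Y - Y * calE N i j)).trace =
      ((skewSingle i j * X - X * skewSingle i j) *
        (skewSingle i j * Y - Y * skewSingle i j)).trace / 2 := by
  have hc : Real.sqrt 2 / 2 * (Real.sqrt 2 / 2) = 1 / 2 := by
    rw [div_mul_div_comm, Real.mul_self_sqrt zero_le_two]; norm_num
  simp only [calE_eq_smul_skewSingle, Matrix.smul_mul, Matrix.mul_smul, ← smul_sub,
    smul_mul_smul, trace_smul, hc, smul_eq_mul]
  ring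

theorem stmt_11_general (N : ℕ) (X Y : Matrix (Fin N) (Fin N) ℝ)
    (hX : Xᵀ = X) :
    ∑ i : Fin N, ∑ j : Fin N,
      (if i < j then
        ((calE N i j * X - X * calE N i j) * (calE N i j * Y - Y * calE N i j)).trace
      else 0)
      = (N : ℝ) * (X * Y).trace - X.trace * Y.trace := by
  have hsymm : ∀ i j : Fin N,
      ((calE N i j * X - X * calE N i j) * (calE N i j * Y - Y * calE N i j)).trace =
        ((calE N j i * X - X * calE N j i) * (calE N j i * Y - Y * calE N j i)).trace := by
    intro i j
    rw [calE_swap, neg_commutator_mul_neg_commutator]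
  have hdiag : ∀ i : Fin N,
      ((calE N i i * X - X * calE N i i) * (calE N i i * Y - Y * calE N i i)).trace = 0 := by
    simp [calE_eq_smul_skewSingle]
  have htotal : ∑ i : Fin N, ∑ j : Fin N,
      ((calE N i j * X - X * calE N i j) * (calE N i j * Y - Y * calE N i j)).trace =
        2 * ((N : ℝ) * (X * Y).trace - X.trace * Y.trace) := by
    simp only [trace_commutator_calE_mul_commutator, ← Finset.sum_div,
      sum_trace_commutator_skewSingle_mul_commutator, hX, Fintype.card_fin]
    ring
  have hsum := sum_sum_ite_lt_add_self_of_symm _ hsymm hdiag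
  rw [htotal] at hsum
  linarith

theorem stmt_11 (N : ℕ) (X Y : Matrix (Fin N) (Fin N) ℝ)
    (hX : Xᵀ = X) (hY : Yᵀ = Y) :
    ∑ i : Fin N, ∑ j : Fin N,
      (if i < j then
        ((calE N i j * X - X * calE N i j) * (calE N i j * Y - Y * calE N i j)).trace
      else 0)
      = (N : ℝ) * (X * Y).trace - X.trace * Y.trace :=
  stmt_11_general N X Y hX
end
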